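/- Let n ≥ 1 and let x be an orthogonal linear transformation of ℝ^{4n}. If the pullback of Φ_qK by x satisfies Φ_qK ∘ x = λ · Φ_qK for some real number λ (where (Φ_qK ∘ x)(x₁,x₂,x₃,x₄) = Φ_qK(x x₁, x x₂, x x₃, x x₄)), then λ = 1 or λ = −1. -/

import Mathlib

open scoped RealInnerProductSpace Kronecker

noncomputable section

/-- `V = ℝ^{4n}`, written with the block index set `Fin 4 × Fin n` (four blocks of size `n`). -/
abbrev Vq (n : ℕ) := EuclideanSpace ℝ (Fin 4 × Fin n)

/-- The 4×4 coefficient matrix of the block matrix `I`. -/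
def I4 : Matrix (Fin 4) (Fin 4) ℝ := !![0,-1,0,0; 1,0,0,0; 0,0,0,-1; 0,0,1,0]

/-- The 4×4 coefficient matrix of the block matrix `J`. -/
def J4 : Matrix (Fin 4) (Fin 4) ℝ := !![0,0,-1,0; 0,0,0,1; 1,0,0,0; 0,-1,0,0]

/-- The 4×4 coefficient matrix of the block matrix `K`. -/
def K4 : Matrix (Fin 4) (Fin 4) ℝ := !![0,0,0,-1; 0,0,-1,0; 0,1,0,0; 1,0,0,0]

/-- The almost complex structure `I` on `ℝ^{4n}`, given in `n×n` block form by
`[[0,−E,0,0],[E,0,0,0],[0,0,0,−E],[0,0,E,0]]` (the Kronecker product `I4 ⊗ E`). -/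
def Iq (n : ℕ) : Module.End ℝ (Vq n) :=
  Matrix.toEuclideanLin (I4 ⊗ₖ (1 : Matrix (Fin n) (Fin n) ℝ))

/-- The almost complex structure `J` on `ℝ^{4n}`. -/
def Jq (n : ℕ) : Module.End ℝ (Vq n) :=
  Matrix.toEuclideanLin (J4 ⊗ₖ (1 : Matrix (Fin n) (Fin n) ℝ))

/-- The almost complex structure `K` on `ℝ^{4n}`. -/
def Kq (n : ℕ) : Module.End ℝ (Vq n) :=
  Matrix.toEuclideanLin (K4 ⊗ₖ (1 : Matrix (Fin n) (Fin n) ℝ))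

/-- `𝔰𝔭(n) = {A ∈ 𝔰𝔬(4n) : AI = IA, AJ = JA, AK = KA}`. -/
def spn (n : ℕ) : Submodule ℝ (Module.End ℝ (Vq n)) where
  carrier := {A | (∀ x y : Vq n, ⟪A x, y⟫ = -⟪x, A y⟫) ∧
    A * Iq n = Iq n * A ∧ A * Jq n = Jq n * A ∧ A * Kq n = Kq n * A}
  add_mem' := by
    rintro a b ⟨ha, hai, haj, hak⟩ ⟨hb, hbi, hbj, hbk⟩
    refine ⟨fun x y => ?_, ?_, ?_, ?_⟩
    · simp only [LinearMap.add_apply, inner_add_left, inner_add_right, ha x y, hb x y]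
      ring
    · rw [add_mul, mul_add, hai, hbi]
    · rw [add_mul, mul_add, haj, hbj]
    · rw [add_mul, mul_add, hak, hbk]
  zero_mem' := by
    refine ⟨fun x y => by simp, by simp [zero_mul, mul_zero], by simp [zero_mul, mul_zero],
      by simp [zero_mul, mul_zero]⟩
  smul_mem' := by
    rintro c a ⟨ha, hai, haj, hak⟩
    refine ⟨fun x y => ?_, ?_, ?_, ?_⟩
    · simp only [LinearMap.smul_apply, real_inner_smul_left, real_inner_smul_right, ha x y]
      ring
    · ext x
      have h := LinearMap.congr_fun hai x
      simp only [Module.End.mul_apply, LinearMap.smul_apply, map_smul] at *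
      rw [h]
    · ext x
      have h := LinearMap.congr_fun haj x
      simp only [Module.End.mul_apply, LinearMap.smul_apply, map_smul] at *
      rw [h]
    · ext x
      have h := LinearMap.congr_fun hak x
      simp only [Module.End.mul_apply, LinearMap.smul_apply, map_smul] at *
      rw [h]

/-- `𝔰𝔭(1) = span{I, J, K}`. -/
def sp1 (n : ℕ) : Submodule ℝ (Module.End ℝ (Vq n)) :=
  Submodule.span ℝ {Iq n, Jq n, Kq n}

/-- The wedge product of a `k`-form and an `l`-form (determinant convention):
`(f ∧ g)(x₁,…,x_{k+l}) = (k! l!)⁻¹ Σ_σ sgn(σ) f(x_{σ(1)},…,x_{σ(k)}) g(x_{σ(k+1)},…,x_{σ(k+l)})`. -/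
def wedgeF {E : Type*} {k l : ℕ} (f : (Fin k → E) → ℝ) (g : (Fin l → E) → ℝ) :
    (Fin (k + l) → E) → ℝ :=
  fun x => ((k.factorial * l.factorial : ℕ) : ℝ)⁻¹ *
    ∑ σ : Equiv.Perm (Fin (k + l)),
      ((Equiv.Perm.sign σ : ℤ) : ℝ) *
        (f (fun i => x (σ (Fin.castAdd l i))) * g (fun j => x (σ (Fin.natAdd k j))))

/-- The 2-form `ω_I(x, y) = g₀(Ix, y)`. -/
def omIf (n : ℕ) : (Fin 2 → Vq n) → ℝ := fun x => ⟪Iq n (x 0), x 1⟫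

/-- The 2-form `ω_J(x, y) = g₀(Jx, y)`. -/
def omJf (n : ℕ) : (Fin 2 → Vq n) → ℝ := fun x => ⟪Jq n (x 0), x 1⟫

/-- The 2-form `ω_K(x, y) = g₀(Kx, y)`. -/
def omKf (n : ℕ) : (Fin 2 → Vq n) → ℝ := fun x => ⟪Kq n (x 0), x 1⟫

/-- The fundamental 4-form `Φ_qK = ω_I ∧ ω_I + ω_J ∧ ω_J + ω_K ∧ ω_K`. -/
def PhiqK (n : ℕ) : (Fin 4 → Vq n) → ℝ :=
  fun x => wedgeF (omIf n) (omIf n) x + wedgeF (omJf n) (omJf n) x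
    + wedgeF (omKf n) (omKf n) x

/-! The operator norm of a continuous multilinear form is unchanged by precomposition with a
linear isometry, so `Φ_qK ∘ x = λ • Φ_qK` gives `‖Φ_qK‖ = |λ| ‖Φ_qK‖`. In finite dimensions
`Φ_qK` is a continuous multilinear form, and it is nonzero because it takes the value `6` on the
frame `(e_{0,z}, e_{1,z}, e_{2,z}, e_{3,z})`; hence `|λ| = 1`. -/

open Equiv

theorem ContinuousMultilinearMap.norm_eq_one_of_compContinuousLinearMap_eq_smul
    {𝕜 ι E G : Type*} [NontriviallyNormedField 𝕜] [Fintype ι]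
    [NormedAddCommGroup E] [NormedSpace 𝕜 E] [NormedAddCommGroup G] [NormedSpace 𝕜 G]
    (f : ContinuousMultilinearMap 𝕜 (fun _ : ι => E) G) (hf : f ≠ 0) (x : E ≃ₗᵢ[𝕜] E) {c : 𝕜}
    (h : ∀ v, f (fun i => x (v i)) = c • f v) : ‖c‖ = 1 := by
  have hcomp : f.compContinuousLinearMap (fun _ => (x : E →L[𝕜] E)) = c • f := ext h
  have hnorm := f.norm_compContinuous_linearIsometryEquiv fun _ => x
  rw [hcomp, norm_smul] at hnorm
  exact (mul_left_eq_self₀.mp hnorm).resolve_right (norm_ne_zero_iff.mpr hf)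

section Wedge

variable {E : Type*} [AddCommGroup E] [Module ℝ E] {k l : ℕ}

def MultilinearMap.wedge (f : MultilinearMap ℝ (fun _ : Fin k => E) ℝ)
    (g : MultilinearMap ℝ (fun _ : Fin l => E) ℝ) :
    MultilinearMap ℝ (fun _ : Fin (k + l) => E) ℝ :=
  ((k.factorial * l.factorial : ℕ) : ℝ)⁻¹ •
    ∑ σ : Perm (Fin (k + l)), ((Perm.sign σ : ℤ) : ℝ) •
      ((((LinearMap.mul' ℝ ℝ).compMultilinearMap (f.domCoprod g)).domDomCongr
        finSumFinEquiv).domDomCongr σ)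

theorem MultilinearMap.coe_wedge (f : MultilinearMap ℝ (fun _ : Fin k => E) ℝ)
    (g : MultilinearMap ℝ (fun _ : Fin l => E) ℝ) : ⇑(f.wedge g) = wedgeF f g := by
  funext v
  simp [wedge, wedgeF]

end Wedge

theorem Continuous.wedgeF {E : Type*} [TopologicalSpace E] {k l : ℕ}
    {f : (Fin k → E) → ℝ} {g : (Fin l → E) → ℝ} (hf : Continuous f) (hg : Continuous g) :
    Continuous (wedgeF f g) := by
  unfold _root_.wedgeF
  fun_prop

/-- For skew-symmetric `M` this is `8 Pf(M)`. -/
def pfaffianSum {R : Type*} [CommRing R] (M : Matrix (Fin 4) (Fin 4) R) : R :=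
  ∑ σ : Perm (Fin 4), ((Perm.sign σ : ℤ) : R) * (M (σ 1) (σ 0) * M (σ 3) (σ 2))

theorem pfaffianSum_map_intCast {R : Type*} [CommRing R] (M : Matrix (Fin 4) (Fin 4) ℤ) :
    pfaffianSum (M.map ((↑) : ℤ → R)) = pfaffianSum M := by
  simp [pfaffianSum]

section InnerForm

variable {E : Type*} [NormedAddCommGroup E] [InnerProductSpace ℝ E]

def innerForm (T : E →ₗ[ℝ] E) : MultilinearMap ℝ (fun _ : Fin 2 => E) ℝ :=
  LinearMap.uncurryLeft
    ((MultilinearMap.ofSubsingletonₗ ℝ ℝ E ℝ (0 : Fin 1)).toLinearMap ∘ₗ innerₛₗ ℝ ∘ₗ T)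

theorem coe_innerForm (T : E →ₗ[ℝ] E) : ⇑(innerForm T) = fun v => ⟪T (v 0), v 1⟫ := rfl

theorem wedgeF_inner_apply (T : E →ₗ[ℝ] E) (e : Fin (2 + 2) → E) :
    wedgeF (fun v : Fin 2 → E => ⟪T (v 0), v 1⟫) (fun v => ⟪T (v 0), v 1⟫) e =
      4⁻¹ * pfaffianSum (Matrix.of fun a b => ⟪T (e b), e a⟫) := by
  simp only [wedgeF, pfaffianSum, Matrix.of_apply]
  norm_num [Nat.factorial]
  rfl

end InnerForm

theorem inner_toEuclideanLin_kronecker_one_single {ι κ : Type*} [Fintype ι] [DecidableEq ι]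
    [Fintype κ] [DecidableEq κ] (A : Matrix ι ι ℝ) (a b : ι) (z : κ) :
    ⟪Matrix.toEuclideanLin (A ⊗ₖ (1 : Matrix κ κ ℝ)) (EuclideanSpace.single (a, z) 1),
      EuclideanSpace.single (b, z) 1⟫ = A b a := by
  simp [EuclideanSpace.inner_single_right, Matrix.toLpLin_apply]

-- The entries are integers, so the 24-term sum can be evaluated by `decide` over `ℤ`.
theorem pfaffianSum_I4 : pfaffianSum I4 = 8 := by
  rw [show I4 = (!![0,-1,0,0; 1,0,0,0; 0,0,0,-1; 0,0,1,0] : Matrix (Fin 4) (Fin 4) ℤ).map (↑) by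
    ext i j; fin_cases i <;> fin_cases j <;> simp [I4], pfaffianSum_map_intCast]
  exact_mod_cast (by decide : pfaffianSum _ = (8 : ℤ))

theorem pfaffianSum_J4 : pfaffianSum J4 = 8 := by
  rw [show J4 = (!![0,0,-1,0; 0,0,0,1; 1,0,0,0; 0,-1,0,0] : Matrix (Fin 4) (Fin 4) ℤ).map (↑) by
    ext i j; fin_cases i <;> fin_cases j <;> simp [J4], pfaffianSum_map_intCast]
  exact_mod_cast (by decide : pfaffianSum _ = (8 : ℤ))

theorem pfaffianSum_K4 : pfaffianSum K4 = 8 := by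
  rw [show K4 = (!![0,0,0,-1; 0,0,-1,0; 0,1,0,0; 1,0,0,0] : Matrix (Fin 4) (Fin 4) ℤ).map (↑) by
    ext i j; fin_cases i <;> fin_cases j <;> simp [K4], pfaffianSum_map_intCast]
  exact_mod_cast (by decide : pfaffianSum _ = (8 : ℤ))

theorem PhiqK_apply_single (n : ℕ) (z : Fin n) :
    PhiqK n (fun k => EuclideanSpace.single (k, z) 1) = 6 := by
  have hmat (A : Matrix (Fin 4) (Fin 4) ℝ) :
      (Matrix.of fun a b => ⟪Matrix.toEuclideanLin (A ⊗ₖ (1 : Matrix (Fin n) (Fin n) ℝ))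
        (EuclideanSpace.single (b, z) 1), EuclideanSpace.single (a, z) 1⟫) = A := by
    ext a b
    exact inner_toEuclideanLin_kronecker_one_single A b a z
  unfold PhiqK omIf omJf omKf
  rw [wedgeF_inner_apply, wedgeF_inner_apply, wedgeF_inner_apply, Iq, Jq, Kq, hmat, hmat, hmat,
    pfaffianSum_I4, pfaffianSum_J4, pfaffianSum_K4]
  norm_num

-- Indexed by `Fin (2 + 2)`, the type produced by `wedge`, so that `coe_wedge` rewrites.
def phiqKMultilinear (n : ℕ) : MultilinearMap ℝ (fun _ : Fin (2 + 2) => Vq n) ℝ :=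
  (innerForm (Iq n)).wedge (innerForm (Iq n)) + (innerForm (Jq n)).wedge (innerForm (Jq n))
    + (innerForm (Kq n)).wedge (innerForm (Kq n))

theorem coe_phiqKMultilinear (n : ℕ) : ⇑(phiqKMultilinear n) = PhiqK n := by
  funext v
  simp only [phiqKMultilinear, add_apply, MultilinearMap.coe_wedge, coe_innerForm]
  rfl

theorem continuous_PhiqK (n : ℕ) : Continuous (PhiqK n) := by
  have hω (T : Vq n →ₗ[ℝ] Vq n) : Continuous fun v : Fin 2 → Vq n => ⟪T (v 0), v 1⟫ := by
    have := T.continuous_of_finiteDimensional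
    fun_prop
  exact (((hω _).wedgeF (hω _)).add ((hω _).wedgeF (hω _))).add ((hω _).wedgeF (hω _))

def phiqK (n : ℕ) : ContinuousMultilinearMap ℝ (fun _ : Fin 4 => Vq n) ℝ :=
  { phiqKMultilinear n with
    cont := by
      simpa only [MultilinearMap.toFun_eq_coe, coe_phiqKMultilinear] using continuous_PhiqK n }

theorem coe_phiqK (n : ℕ) : ⇑(phiqK n) = PhiqK n := coe_phiqKMultilinear n

/-- If an orthogonal transformation `x` of `ℝ^{4n}` satisfies `Φ_qK ∘ x = λ · Φ_qK`,
then `λ = 1` or `λ = −1`. -/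
theorem statement10 (n : ℕ) (hn : 1 ≤ n) (x : Vq n ≃ₗᵢ[ℝ] Vq n) (lam : ℝ)
    (h : ∀ v : Fin 4 → Vq n, PhiqK n (fun i => x (v i)) = lam * PhiqK n v) :
    lam = 1 ∨ lam = -1 := by
  have hne : phiqK n ≠ 0 := fun hzero => by
    have hframe := PhiqK_apply_single n ⟨0, hn⟩
    rw [← coe_phiqK, hzero] at hframe
    norm_num at hframe
  have habs : |lam| = 1 :=
    (phiqK n).norm_eq_one_of_compContinuousLinearMap_eq_smul hne x (by simpa [coe_phiqK] using h)
  exact (abs_eq zero_le_one).mp habs
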